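/- For every integer N ≥ 3 and every λ ∈ [0,1], the operator Y := W_C^λ − λ·W_C is positive semidefinite, where W_C is the cluster-state witness operator and W_C^λ its modified (unsharp) version. -/

import Mathlib

open Matrix
open scoped ComplexOrder

noncomputable section

/-- The space of operators on `N` qubits: complex `2^N × 2^N` matrices, with the
`N`-fold tensor-product structure made explicit by indexing rows and columns by
functions `Fin N → Fin 2`. -/
abbrev QM (N : ℕ) := Matrix (Fin N → Fin 2) (Fin N → Fin 2) ℂ

/-- The Pauli matrix σ_x. -/
def sigx : Matrix (Fin 2) (Fin 2) ℂ := !![0, 1; 1, 0]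

/-- The Pauli matrix σ_z. -/
def sigz : Matrix (Fin 2) (Fin 2) ℂ := !![1, 0; 0, -1]

/-- The tensor (Kronecker) product `f 0 ⊗ f 1 ⊗ ⋯ ⊗ f (N-1)` of single-qubit operators. -/
def tensorAll (N : ℕ) (f : Fin N → Matrix (Fin 2) (Fin 2) ℂ) : QM N :=
  Matrix.of fun v w => ∏ i, f i (v i) (w i)

/-- The single-qubit operator `M` acting on qubit `m`, tensored with the identity
on all other qubits. -/
def site (N : ℕ) (m : Fin N) (M : Matrix (Fin 2) (Fin 2) ℂ) : QM N :=
  tensorAll N (fun i => if i = m then M else 1)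

/-- Cluster-state stabilizer generator (0-based index `m : Fin N`): σ_x on qubit `m`
and σ_z on its nearest neighbour(s); it represents the 1-based generator `S_{m+1}`. -/
def clS (N : ℕ) (m : Fin N) : QM N :=
  tensorAll N (fun i =>
    if i = m then sigx
    else if i.val + 1 = m.val ∨ m.val + 1 = i.val then sigz else 1)

/-- Factor `(I + S_{m+1})/2` of the cluster witness. -/
def clFactor (N : ℕ) (m : Fin N) : QM N := (1/2 : ℂ) • ((1 : QM N) + clS N m)

/-- Factor of the modified cluster witness: `(I + λ S_N)/2` for the last generator and
`(I + S_{m+1})/2` otherwise. -/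
def clFactorMod (N : ℕ) (lam : ℝ) (m : Fin N) : QM N :=
  if m.val = N - 1 then (1/2 : ℂ) • ((1 : QM N) + (lam : ℂ) • clS N m)
  else (1/2 : ℂ) • ((1 : QM N) + clS N m)

/-- Product of the cluster-witness factors over the 1-based indices `m+1` of parity
`r` (`r = 1` gives the even 1-based indices, `r = 0` the odd ones); the factors
pairwise commute, so the list ordering is immaterial. -/
def clProd (N : ℕ) (r : ℕ) : QM N :=
  (((List.finRange N).filter (fun m => m.val % 2 = r)).map (clFactor N)).prod

/-- The analogous parity product for the modified cluster witness; the factor carrying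
`λ` (the one for `S_N`) lies in the even product when `N` is even and in the odd one
when `N` is odd. -/
def clProdMod (N : ℕ) (lam : ℝ) (r : ℕ) : QM N :=
  (((List.finRange N).filter (fun m => m.val % 2 = r)).map (clFactorMod N lam)).prod

/-- The cluster-state genuine-multipartite-entanglement witness
`W_C = 3 I − 2 [∏_{even m}(I+S_m)/2 + ∏_{odd m}(I+S_m)/2]`. -/
def clWitness (N : ℕ) : QM N :=
  (3 : ℂ) • (1 : QM N) - (2 : ℂ) • (clProd N 1 + clProd N 0)

/-- The modified (unsharp) cluster witness `W_C^λ`, obtained from `W_C` by replacing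
the factor `(I+S_N)/2` by `(I+λS_N)/2`. -/
def clWitnessMod (N : ℕ) (lam : ℝ) : QM N :=
  (3 : ℂ) • (1 : QM N) - (2 : ℂ) • (clProdMod N lam 1 + clProdMod N lam 0)

open scoped MatrixOrder

/-! Each `(I + S_m)/2` is a projection, and generators of equal parity commute, so both parity
products in `W_C` are projections. Writing `(I + λS_N)/2 = λ(I + S_N)/2 + (1 - λ)I/2` gives
`W_C^λ - λW_C = (1 - λ)(2(I - P) + (I - Q))`, where `P` is the parity product without `S_N` and
`Q` is the one with `S_N`, its factor `(I + S_N)/2` removed. Both are projections, so this is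
positive semidefinite. -/

lemma isStarProjection_half_smul_one_add {R : Type*} [Ring R] [StarRing R] [Algebra ℂ R]
    [StarModule ℂ R] {s : R} (hs : IsSelfAdjoint s) (hs2 : s * s = 1) :
    IsStarProjection ((1 / 2 : ℂ) • (1 + s)) where
  isIdempotentElem := by
    simp only [IsIdempotentElem, smul_mul_smul_comm, add_mul, mul_add, one_mul, mul_one, hs2]
    module
  isSelfAdjoint := .smul (by simp [IsSelfAdjoint]) ((IsSelfAdjoint.one R).add hs)

theorem IsStarProjection.list_prod {R : Type*} [Semiring R] [StarRing R] {l : List R}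
    (hl : ∀ p ∈ l, IsStarProjection p) (hc : l.Pairwise Commute) : IsStarProjection l.prod := by
  induction l with
  | nil => exact .one R
  | cons p l ih =>
    rw [List.pairwise_cons] at hc
    rw [List.prod_cons]
    exact (hl p List.mem_cons_self).mul (ih (fun q hq => hl q (List.mem_cons_of_mem p hq)) hc.2)
      (Commute.list_prod_right l p hc.1)

lemma Matrix.posSemidef_one_sub_of_isStarProjection {n 𝕜 : Type*} [Fintype n] [DecidableEq n]
    [RCLike 𝕜] {P : Matrix n n 𝕜} (hP : IsStarProjection P) : (1 - P).PosSemidef :=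
  nonneg_iff_posSemidef.mp hP.one_sub_nonneg

section TensorProduct

variable {N : ℕ}

lemma tensorAll_mul (f g : Fin N → Matrix (Fin 2) (Fin 2) ℂ) :
    tensorAll N f * tensorAll N g = tensorAll N (fun i => f i * g i) := by
  ext v w
  simp only [tensorAll, mul_apply, of_apply, ← Finset.prod_mul_distrib]
  exact (Fintype.prod_sum fun i x => f i (v i) x * g i x (w i)).symm

lemma tensorAll_one : tensorAll N (fun _ => 1) = 1 := by
  ext v w
  simp only [tensorAll, of_apply, one_apply, Finset.prod_boole, Finset.mem_univ, true_implies,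
    funext_iff]

lemma tensorAll_conjTranspose (f : Fin N → Matrix (Fin 2) (Fin 2) ℂ) :
    (tensorAll N f)ᴴ = tensorAll N (fun i => (f i)ᴴ) := by
  ext v w
  simp [tensorAll, conjTranspose_apply, star_prod]

lemma isSelfAdjoint_tensorAll {f : Fin N → Matrix (Fin 2) (Fin 2) ℂ}
    (hf : ∀ i, IsSelfAdjoint (f i)) : IsSelfAdjoint (tensorAll N f) := by
  rw [IsSelfAdjoint, star_eq_conjTranspose, tensorAll_conjTranspose]
  exact congrArg _ (funext hf)

lemma tensorAll_mul_self {f : Fin N → Matrix (Fin 2) (Fin 2) ℂ} (hf : ∀ i, f i * f i = 1) :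
    tensorAll N f * tensorAll N f = 1 := by
  simp only [tensorAll_mul, hf, tensorAll_one]

lemma commute_tensorAll {f g : Fin N → Matrix (Fin 2) (Fin 2) ℂ}
    (h : ∀ i, Commute (f i) (g i)) : Commute (tensorAll N f) (tensorAll N g) := by
  simp only [Commute, SemiconjBy, tensorAll_mul, fun i => (h i).eq]

end TensorProduct

lemma isSelfAdjoint_sigx : IsSelfAdjoint sigx := by
  ext i j; fin_cases i <;> fin_cases j <;> simp [sigx]

lemma isSelfAdjoint_sigz : IsSelfAdjoint sigz := by
  ext i j; fin_cases i <;> fin_cases j <;> simp [sigz]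

lemma sigx_mul_self : sigx * sigx = 1 := by
  ext i j; fin_cases i <;> fin_cases j <;> simp [sigx, mul_apply, Fin.sum_univ_two, one_apply]

lemma sigz_mul_self : sigz * sigz = 1 := by
  ext i j; fin_cases i <;> fin_cases j <;> simp [sigz, mul_apply, Fin.sum_univ_two, one_apply]

section ClusterGenerators

variable {N : ℕ}

lemma isSelfAdjoint_clS (m : Fin N) : IsSelfAdjoint (clS N m) :=
  isSelfAdjoint_tensorAll fun i => by
    split_ifs
    exacts [isSelfAdjoint_sigx, isSelfAdjoint_sigz, .one _]

lemma clS_mul_self (m : Fin N) : clS N m * clS N m = 1 :=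
  tensorAll_mul_self fun i => by
    split_ifs
    exacts [sigx_mul_self, sigz_mul_self, mul_one 1]

/-- Same-parity generators sit at distance at least two, so their σ_x never meets the
other's σ_z. -/
lemma commute_clS {a b : Fin N} (hab : a ≠ b) (hpar : a.val % 2 = b.val % 2) :
    Commute (clS N a) (clS N b) := by
  have hval : a.val ≠ b.val := Fin.val_ne_of_ne hab
  refine commute_tensorAll fun i => ?_
  split_ifs
  all_goals first
    | exact Commute.one_left _
    | exact Commute.one_right _
    | exact Commute.refl _
    | (subst_vars; omega)

end ClusterGenerators

lemma isStarProjection_clFactor {N : ℕ} (m : Fin N) : IsStarProjection (clFactor N m) :=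
  isStarProjection_half_smul_one_add (isSelfAdjoint_clS m) (clS_mul_self m)

lemma commute_clFactor {N : ℕ} {a b : Fin N} (hab : a ≠ b) (hpar : a.val % 2 = b.val % 2) :
    Commute (clFactor N a) (clFactor N b) :=
  have hS : Commute (1 + clS N a) (1 + clS N b) :=
    (Commute.one_right _).add_right ((Commute.one_left _).add_left (commute_clS hab hpar))
  (hS.smul_left _).smul_right _

lemma isStarProjection_prod_clFactor {N r : ℕ} {l : List (Fin N)} (hl : l.Nodup)
    (hpar : ∀ m ∈ l, m.val % 2 = r) : IsStarProjection (l.map (clFactor N)).prod := by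
  refine IsStarProjection.list_prod (by simpa using fun m _ => isStarProjection_clFactor m) ?_
  rw [List.pairwise_map]
  exact hl.imp_of_mem fun ha hb hab => commute_clFactor hab ((hpar _ ha).trans (hpar _ hb).symm)

lemma isStarProjection_clProd (N r : ℕ) : IsStarProjection (clProd N r) :=
  isStarProjection_prod_clFactor ((List.nodup_finRange N).filter _) fun m hm => by
    simpa using (List.mem_filter.mp hm).2

def clProdInit (n r : ℕ) : QM (n + 1) :=
  ((((List.finRange n).filter (fun m => m.val % 2 = r)).map Fin.castSucc).map
    (clFactor (n + 1))).prod

lemma isStarProjection_clProdInit (n r : ℕ) : IsStarProjection (clProdInit n r) :=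
  isStarProjection_prod_clFactor
    (((List.nodup_finRange n).filter _).map (Fin.castSucc_injective n)) fun m hm => by
    obtain ⟨m', hm', rfl⟩ := List.mem_map.mp hm
    simpa using (List.mem_filter.mp hm').2

lemma filter_finRange_succ_mod_two {n r : ℕ} (hr : n % 2 = r) :
    (List.finRange (n + 1)).filter (fun m => m.val % 2 = r)
      = ((List.finRange n).filter (fun m => m.val % 2 = r)).map Fin.castSucc ++ [Fin.last n] := by
  rw [List.finRange_succ_last, List.filter_append, List.filter_map]
  simp [Function.comp_def, hr]

lemma clProd_succ_of_mod_two_eq {n r : ℕ} (hr : n % 2 = r) :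
    clProd (n + 1) r = clProdInit n r * clFactor (n + 1) (Fin.last n) := by
  rw [clProd, clProdInit, filter_finRange_succ_mod_two hr, List.map_append, List.prod_append,
    List.map_singleton, List.prod_singleton]

lemma clFactorMod_of_ne {N : ℕ} (lam : ℝ) {m : Fin N} (hm : m.val ≠ N - 1) :
    clFactorMod N lam m = clFactor N m := by
  rw [clFactorMod, if_neg hm, clFactor]

lemma clFactorMod_last (n : ℕ) (lam : ℝ) :
    clFactorMod (n + 1) lam (Fin.last n)
      = (lam : ℂ) • clFactor (n + 1) (Fin.last n) + ((1 - lam) / 2 : ℂ) • 1 := by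
  rw [clFactorMod, if_pos (by simp), clFactor]
  module

lemma clProdMod_succ_of_mod_two_eq {n r : ℕ} (lam : ℝ) (hr : n % 2 = r) :
    clProdMod (n + 1) lam r
      = (lam : ℂ) • clProd (n + 1) r + ((1 - lam) / 2 : ℂ) • clProdInit n r := by
  have hinit : ((((List.finRange n).filter (fun m => m.val % 2 = r)).map Fin.castSucc).map
      (clFactorMod (n + 1) lam)).prod = clProdInit n r := by
    refine congrArg _ (List.map_congr_left fun m hm => clFactorMod_of_ne lam ?_)
    obtain ⟨m', _, rfl⟩ := List.mem_map.mp hm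
    simp [m'.isLt.ne]
  rw [clProdMod, filter_finRange_succ_mod_two hr, List.map_append, List.prod_append,
    List.map_singleton, List.prod_singleton, hinit, clFactorMod_last, clProd_succ_of_mod_two_eq hr,
    mul_add, mul_smul_comm, mul_smul_comm, mul_one]

lemma clProdMod_succ_of_mod_two_ne {n r : ℕ} (lam : ℝ) (hr : n % 2 ≠ r) :
    clProdMod (n + 1) lam r = clProd (n + 1) r := by
  rw [clProdMod, clProd]
  refine congrArg _ (List.map_congr_left fun m hm => clFactorMod_of_ne lam ?_)
  have hm : m.val % 2 = r := by simpa using (List.mem_filter.mp hm).2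
  omega

lemma apply_one_add_apply_zero_eq {M : Type*} [AddCommMagma M] (f : ℕ → M) (n : ℕ) :
    f 1 + f 0 = f (n % 2) + f ((n + 1) % 2) := by
  rcases Nat.mod_two_eq_zero_or_one n with h | h
  · rw [h, show (n + 1) % 2 = 1 by omega, add_comm]
  · rw [h, show (n + 1) % 2 = 0 by omega]

lemma clWitnessMod_sub_smul_clWitness (n : ℕ) (lam : ℝ) :
    clWitnessMod (n + 1) lam - (lam : ℂ) • clWitness (n + 1)
      = (1 - lam : ℂ) • ((2 : ℂ) • (1 - clProd (n + 1) ((n + 1) % 2))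
          + (1 - clProdInit n (n % 2))) := by
  rw [clWitnessMod, clWitness, apply_one_add_apply_zero_eq (clProdMod (n + 1) lam) n,
    apply_one_add_apply_zero_eq (clProd (n + 1)) n, clProdMod_succ_of_mod_two_eq lam rfl,
    clProdMod_succ_of_mod_two_ne lam (by omega)]
  module

/-- For every integer `N ≥ 3` and every `λ ∈ [0,1]`, the operator
`Y := W_C^λ − λ·W_C` is positive semidefinite, where `W_C` is the cluster-state
witness operator and `W_C^λ` its modified (unsharp) version. -/
theorem cluster_modifiedWitness_sub_smul_witness_posSemidef
    (N : ℕ) (hN : 3 ≤ N) (lam : ℝ) (hlam : lam ∈ Set.Icc (0 : ℝ) 1) :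
    (clWitnessMod N lam - (lam : ℂ) • clWitness N).PosSemidef := by
  obtain ⟨n, rfl⟩ : ∃ n, N = n + 1 := ⟨N - 1, by omega⟩
  have hcoef : (0 : ℂ) ≤ 1 - lam := by exact_mod_cast sub_nonneg.mpr hlam.2
  rw [clWitnessMod_sub_smul_clWitness]
  refine .smul (.add (.smul ?_ (by norm_num)) ?_) hcoef
  · exact posSemidef_one_sub_of_isStarProjection (isStarProjection_clProd _ _)
  · exact posSemidef_one_sub_of_isStarProjection (isStarProjection_clProdInit _ _)

end
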